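/- arXiv:2405.04363 — 7 statements merged into one kernel-verified Lean document; each statement's English description precedes it below -/
import Mathlib

section
/- Let P and Q be probability measures with Q ≪ P and r = dQ/dP. Define w_P(h) = P[r ≥ h], w_Q(h) = Q[r ≥ h], W_P(h) = ∫₀^h w_P(η) dη, and S_P(h) = 1 − W_P(h). Then for all h ≥ 0, S_P(h) = w_Q(h) − h·w_P(h). -/
/-!
Both sides are read off `∫ min(r, h) dP`. By the layer-cake formula this integral is
`∫₀^h P(r ≥ t) dt = W_P(h)`. Splitting it instead along `{r ≥ h}` gives
`h · P(r ≥ h) + ∫_{r < h} r dP = h · w_P(h) + Q(r < h) = h · w_P(h) + 1 − w_Q(h)`.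
-/

open MeasureTheory Set

section

variable {α : Type*} [MeasurableSpace α]

theorem integral_min_const_eq_integral_Ioc_measureReal_le {μ : Measure α} [IsFiniteMeasure μ]
    {f : α → ℝ} (hf : AEStronglyMeasurable f μ) (hf_nn : 0 ≤ᵐ[μ] f) {h : ℝ} (hh : 0 ≤ h) :
    ∫ x, min (f x) h ∂μ = ∫ t in Ioc 0 h, μ.real {x | t ≤ f x} := by
  have hg_nn : 0 ≤ᵐ[μ] fun x ↦ min (f x) h := by
    filter_upwards [hf_nn] with x hx using le_min hx hh
  have hg_le : (fun x ↦ min (f x) h) ≤ᵐ[μ] fun _ ↦ h := ae_of_all _ fun x ↦ min_le_right _ _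
  have hg_int : Integrable (fun x ↦ min (f x) h) μ := by
    refine .of_bound (hf.inf aestronglyMeasurable_const) h ?_
    filter_upwards [hg_nn] with x hx
    rw [Real.norm_of_nonneg hx]
    exact min_le_right _ _
  rw [hg_int.integral_eq_integral_Ioc_meas_le hg_nn hg_le]
  refine setIntegral_congr_fun measurableSet_Ioc fun t ht ↦ ?_
  simp only [le_min_iff, ht.2, and_true]

theorem integral_min_toReal_rnDeriv_const {μ ν : Measure α} [IsFiniteMeasure μ]
    [IsFiniteMeasure ν] (hμν : μ ≪ ν) (h : ℝ) :
    ∫ x, min (μ.rnDeriv ν x).toReal h ∂ν =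
      h * ν.real {x | h ≤ (μ.rnDeriv ν x).toReal} + μ.real {x | (μ.rnDeriv ν x).toReal < h} := by
  set r : α → ℝ := fun x ↦ (μ.rnDeriv ν x).toReal
  have hr : Measurable r := (Measure.measurable_rnDeriv μ ν).ennreal_toReal
  have hA : MeasurableSet {x | h ≤ r x} := measurableSet_le measurable_const hr
  have hint : Integrable (fun x ↦ min (r x) h) ν :=
    Measure.integrable_toReal_rnDeriv.inf (integrable_const h)
  have hAc : {x | h ≤ r x}ᶜ = {x | r x < h} := by ext; simp
  rw [← integral_add_compl hA hint, hAc,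
    setIntegral_congr_fun hA fun x (hx : h ≤ r x) ↦ min_eq_right hx,
    setIntegral_congr_fun (measurableSet_lt hr measurable_const)
      fun x (hx : r x < h) ↦ min_eq_left hx.le,
    setIntegral_const, Measure.setIntegral_toReal_rnDeriv hμν, smul_eq_mul, mul_comm]

end

/-- The survival-function identity `S_P(h) = w_Q(h) − h·w_P(h)` for all `h ≥ 0`. -/
theorem SP_eq_wQ_sub_h_mul_wP {Ω : Type*} [MeasurableSpace Ω]
    (P Q : Measure Ω) [IsProbabilityMeasure P] [IsProbabilityMeasure Q]
    (hQP : Q ≪ P)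
    (r : Ω → ℝ) (hr : ∀ x, r x = (Q.rnDeriv P x).toReal)
    (wP : ℝ → ℝ) (hwP : ∀ h, wP h = (P {x | h ≤ r x}).toReal)
    (wQ : ℝ → ℝ) (hwQ : ∀ h, wQ h = (Q {x | h ≤ r x}).toReal)
    (WP : ℝ → ℝ) (hWP : ∀ h, WP h = ∫ η in Set.Ioc (0 : ℝ) h, wP η)
    (SP : ℝ → ℝ) (hSP : ∀ h, SP h = 1 - WP h) :
    ∀ h : ℝ, 0 ≤ h → SP h = wQ h - h * wP h := by
  intro h hh
  have hr_meas : Measurable r :=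
    funext hr ▸ (Measure.measurable_rnDeriv Q P).ennreal_toReal
  have layer_cake : WP h = ∫ x, min (r x) h ∂P := by
    rw [integral_min_const_eq_integral_Ioc_measureReal_le hr_meas.aestronglyMeasurable
      (ae_of_all _ fun x ↦ hr x ▸ ENNReal.toReal_nonneg) hh, hWP]
    exact setIntegral_congr_fun measurableSet_Ioc fun t _ ↦ hwP t
  have hQ_lt : Q.real {x | r x < h} = 1 - Q.real {x | h ≤ r x} := by
    rw [← probReal_compl_eq_one_sub (measurableSet_le measurable_const hr_meas)]
    congr 1
    ext
    simp
  have truncated_split := integral_min_toReal_rnDeriv_const hQP h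
  simp only [← hr] at truncated_split
  rw [hSP, layer_cake, truncated_split, hQ_lt, hwQ, hwP]
  simp only [measureReal_def]
  ring
end

section
/- Let f : [0,∞) → [0,∞] be convex with f(1) = 0 and f'(1) = 0, and let P, Q be probability measures with Q ≪ P, r = dQ/dP, and D_f(Q‖P) = E_{X∼P}[f(r(X))]. Define w_P(h) = P[r ≥ h] and S_P(h) = 1 − ∫₀^h w_P(η) dη. Then for every a ≥ 1 with f'(a) > 0, S_P(a) ≤ D_f(Q‖P) / f'(a). -/
open MeasureTheory Set

/-! By the layer-cake formula, `∫₀^a P(r ≥ η) dη = E[min r a]`, so `S_P(a) = E[r] - E[min r a]`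
`= E[(r - a)⁺]` since `E[r] = Q(Ω) = 1`. Convexity and `f ≥ 0` give `f(x) ≥ f'(a) (x - a)⁺`
(the tangent line at `a` above `a`, the bound `f ≥ 0` below it); integrate at `x = r`. -/

theorem ConvexOn.deriv_mul_max_sub_le {f : ℝ → ℝ} {a x : ℝ} (hconv : ConvexOn ℝ (Ici 0) f)
    (hf : ∀ y ≥ (0 : ℝ), 0 ≤ f y) (ha : 0 ≤ a) (hfa : DifferentiableAt ℝ f a) (hx : 0 ≤ x) :
    deriv f a * max (x - a) 0 ≤ f x := by
  rcases le_or_gt x a with hxa | hax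
  · rw [max_eq_right (by linarith), mul_zero]
    exact hf x hx
  · have hslope : deriv f a ≤ (f x - f a) / (x - a) := by
      simpa [slope_def_field] using hconv.deriv_le_slope ha hx hax hfa
    rw [max_eq_left (by linarith)]
    nlinarith [(le_div_iff₀ (sub_pos.mpr hax)).mp hslope, hf a ha]

theorem integral_max_sub_zero_eq_sub_integral_Ioc_meas_le {α : Type*} [MeasurableSpace α]
    {μ : Measure α} {r : α → ℝ} (hr : Integrable r μ) (hr0 : 0 ≤ᵐ[μ] r) {a : ℝ} (ha : 0 ≤ a) :
    ∫ x, max (r x - a) 0 ∂μ = ∫ x, r x ∂μ - ∫ t in Ioc 0 a, μ.real {x | t ≤ r x} := by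
  have hmin_int : Integrable (fun x => min (r x) a) μ := by
    refine hr.mono (hr.aestronglyMeasurable.inf aestronglyMeasurable_const) ?_
    filter_upwards [hr0] with x hx
    simp only [Real.norm_eq_abs, abs_of_nonneg hx, abs_of_nonneg (le_min hx ha)]
    exact min_le_left _ _
  have hlayer : ∫ x, min (r x) a ∂μ = ∫ t in Ioc 0 a, μ.real {x | t ≤ r x} := by
    rw [hmin_int.integral_eq_integral_Ioc_meas_le (M := a)
      (by filter_upwards [hr0] with x hx using le_min hx ha)
      (Filter.Eventually.of_forall fun x => min_le_right _ _)]
    refine setIntegral_congr_fun measurableSet_Ioc fun t ht => ?_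
    simp only [le_min_iff, ht.2, and_true]
  have hsplit : ∀ x, max (r x - a) 0 = r x - min (r x) a := fun x => by
    rcases le_total (r x) a with h | h <;> simp [h]
  simp_rw [hsplit]
  rw [integral_sub hr hmin_int, hlayer]

theorem SP_le_fDiv_div_deriv_general {Ω : Type*} [MeasurableSpace Ω]
    (P Q : Measure Ω) [IsProbabilityMeasure P] [IsProbabilityMeasure Q]
    (hQP : Q ≪ P)
    (r : Ω → ℝ) (hr : ∀ x, r x = (Q.rnDeriv P x).toReal)
    (wP : ℝ → ℝ) (hwP : ∀ h, wP h = (P {x | h ≤ r x}).toReal)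
    (SP : ℝ → ℝ) (hSP : ∀ h, SP h = 1 - ∫ η in Set.Ioc (0 : ℝ) h, wP η)
    (f : ℝ → ℝ) (hconv : ConvexOn ℝ (Set.Ici 0) f)
    (hfnonneg : ∀ x ≥ (0 : ℝ), 0 ≤ f x)
    (Df : ℝ) (hDf : Df = ∫ x, f (r x) ∂P)
    (hint : Integrable (fun x => f (r x)) P) :
    ∀ a ≥ (1 : ℝ), 0 < deriv f a → SP a ≤ Df / deriv f a := by
  intro a ha hfa
  have hr_eq : r = fun x => (Q.rnDeriv P x).toReal := funext hr
  have hr0 : ∀ x, 0 ≤ r x := fun x => hr x ▸ ENNReal.toReal_nonneg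
  have hr_int : Integrable r P := hr_eq ▸ Measure.integrable_toReal_rnDeriv
  have hr_one : ∫ x, r x ∂P = 1 := by
    rw [hr_eq, Measure.integral_toReal_rnDeriv hQP, probReal_univ]
  have hSP_eq : SP a = ∫ x, max (r x - a) 0 ∂P := by
    rw [hSP, integral_max_sub_zero_eq_sub_integral_Ioc_meas_le hr_int
      (Filter.Eventually.of_forall hr0) (by linarith), hr_one]
    simp_rw [hwP, measureReal_def]
  rw [le_div_iff₀ hfa, hSP_eq, hDf, mul_comm, ← integral_const_mul]
  refine integral_mono_of_nonneg (Filter.Eventually.of_forall fun x => by positivity) hint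
    (Filter.Eventually.of_forall fun x => ?_)
  exact hconv.deriv_mul_max_sub_le hfnonneg (by linarith)
    (differentiableAt_of_deriv_ne_zero hfa.ne') (hr0 x)

/-- For a convex `f ≥ 0` on `[0, ∞)` with `f(1) = 0`, `f'(1) = 0`, the survival
function satisfies `S_P(a) ≤ D_f(Q‖P) / f'(a)` for every `a ≥ 1` with `f'(a) > 0`. -/
theorem SP_le_fDiv_div_deriv {Ω : Type*} [MeasurableSpace Ω]
    (P Q : Measure Ω) [IsProbabilityMeasure P] [IsProbabilityMeasure Q]
    (hQP : Q ≪ P)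
    (r : Ω → ℝ) (hr : ∀ x, r x = (Q.rnDeriv P x).toReal)
    (wP : ℝ → ℝ) (hwP : ∀ h, wP h = (P {x | h ≤ r x}).toReal)
    (SP : ℝ → ℝ) (hSP : ∀ h, SP h = 1 - ∫ η in Set.Ioc (0 : ℝ) h, wP η)
    (f : ℝ → ℝ) (hconv : ConvexOn ℝ (Set.Ici 0) f)
    (hfnonneg : ∀ x ≥ (0 : ℝ), 0 ≤ f x) (hf1 : f 1 = 0)
    (hdiff : ∀ x > (0 : ℝ), DifferentiableAt ℝ f x) (hf'1 : deriv f 1 = 0)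
    (Df : ℝ) (hDf : Df = ∫ x, f (r x) ∂P)
    (hint : Integrable (fun x => f (r x)) P) :
    ∀ a ≥ (1 : ℝ), 0 < deriv f a → SP a ≤ Df / deriv f a :=
  SP_le_fDiv_div_deriv_general P Q hQP r hr wP hwP SP hSP f hconv hfnonneg Df hDf hint
end

section
/- In particular, taking f(x) = x·log₂x − (x−1)·log₂e (so that D_f = D_KL in bits), for every a ≥ 1 one has S_P(a) ≤ D_KL(Q‖P) / log₂ a (up to the precise form of f', the bound S_P(a)·f'(a) ≤ D_KL(Q‖P) holds with f'(a) = log₂ a). -/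
/-!
Writing `S_P(a)` through the layer-cake formula, `∫₀^a P(r ≥ η) dη = E_P[min(r, a)]`, and using
`E_P[r] = 1` gives `S_P(a) = E_P[(r - a)⁺]`. With `φ(y) = y log y + 1 - y ≥ 0` (`klFun`), whose
integral against `P` is the KL divergence in nats, the pointwise bound `(y - a)⁺ log a ≤ φ(y)` for
`a ≥ 1` integrates to `S_P(a) log a ≤ D_KL(Q‖P) · log 2`.
-/

open MeasureTheory Set Real InformationTheory

/-- For `y ≥ a`, `klFun y - (y - a) log a ≥ klFun a ≥ 0`: `klFun` lies above its tangent at `a`,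
whose slope is `log a`. -/
lemma max_sub_zero_mul_log_le_klFun {y a : ℝ} (hy : 0 ≤ y) (ha : 1 ≤ a) :
    max (y - a) 0 * log a ≤ klFun y := by
  rcases le_total y a with hya | hay
  · rw [max_eq_right (by linarith), zero_mul]
    exact klFun_nonneg hy
  · have ha0 : 0 < a := by linarith
    have hy0 : 0 < y := by linarith
    have hlog : 1 - a / y ≤ log y - log a := by
      have := one_sub_inv_le_log_of_pos (div_pos hy0 ha0)
      rwa [inv_div, log_div hy0.ne' ha0.ne'] at this
    have hcancel : y * (a / y) = a := by field_simp
    have hka := klFun_nonneg ha0.le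
    rw [max_eq_left (by linarith)]
    rw [klFun_apply] at hka ⊢
    nlinarith [mul_le_mul_of_nonneg_left hlog hy0.le]

section

variable {α : Type*} [MeasurableSpace α] {μ : Measure α} {f : α → ℝ}

lemma integral_sub_setIntegral_Ioc_measureReal_le [IsFiniteMeasure μ] (hf : Integrable f μ)
    (hf0 : 0 ≤ᵐ[μ] f) {a : ℝ} (ha : 0 ≤ a) :
    ∫ x, f x ∂μ - ∫ t in Ioc 0 a, μ.real {x | t ≤ f x} = ∫ x, max (f x - a) 0 ∂μ := by
  have hmin : Integrable (fun x => min (f x) a) μ := hf.inf (integrable_const a)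
  have hlayer : ∫ t in Ioc 0 a, μ.real {x | t ≤ f x} = ∫ x, min (f x) a ∂μ := by
    rw [hmin.integral_eq_integral_Ioc_meas_le (hf0.mono fun x hx => le_min hx ha)
      (ae_of_all _ fun x => min_le_right _ _)]
    refine setIntegral_congr_fun measurableSet_Ioc fun t ht => ?_
    simp only [le_min_iff, ht.2, and_true]
  rw [hlayer, ← integral_sub hf hmin]
  refine integral_congr_ae (ae_of_all _ fun x => ?_)
  rcases le_total (f x) a with h | h
  · simp [min_eq_left h, max_eq_right (sub_nonpos.mpr h)]
  · simp [min_eq_right h, max_eq_left (sub_nonneg.mpr h)]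

lemma MeasureTheory.Integrable.klFun_comp [IsFiniteMeasure μ] (hf : Integrable f μ)
    (hflog : Integrable (fun x => f x * log (f x)) μ) :
    Integrable (fun x => klFun (f x)) μ := by
  refine (hflog.add ((integrable_const 1).sub hf)).congr (ae_of_all _ fun x => ?_)
  simp only [Pi.add_apply, Pi.sub_apply, klFun_apply]
  ring

lemma integral_klFun_eq_integral_mul_log [IsProbabilityMeasure μ] (hf : Integrable f μ)
    (hf1 : ∫ x, f x ∂μ = 1) (hflog : Integrable (fun x => f x * log (f x)) μ) :
    ∫ x, klFun (f x) ∂μ = ∫ x, f x * log (f x) ∂μ := by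
  have h1f : Integrable (fun x => 1 - f x) μ := (integrable_const 1).sub hf
  simp only [klFun_apply, add_sub_assoc]
  rw [integral_add hflog h1f, integral_sub (integrable_const 1) hf, hf1]
  simp

lemma integral_mul_logb_eq (b : ℝ) :
    ∫ x, f x * logb b (f x) ∂μ = (∫ x, f x * log (f x) ∂μ) / log b := by
  simp only [logb, ← mul_div_assoc, integral_div]

end

/-- KL specialization of the survival bound: for every `a ≥ 1`,
`S_P(a) · log₂ a ≤ D_KL(Q‖P)` where `D_KL(Q‖P) = ∫ r log₂ r dP`. -/
theorem SP_mul_logb_le_KL {Ω : Type*} [MeasurableSpace Ω]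
    (P Q : Measure Ω) [IsProbabilityMeasure P] [IsProbabilityMeasure Q]
    (hQP : Q ≪ P)
    (r : Ω → ℝ) (hr : ∀ x, r x = (Q.rnDeriv P x).toReal)
    (wP : ℝ → ℝ) (hwP : ∀ h, wP h = (P {x | h ≤ r x}).toReal)
    (SP : ℝ → ℝ) (hSP : ∀ h, SP h = 1 - ∫ η in Set.Ioc (0 : ℝ) h, wP η)
    (DKL : ℝ) (hDKL : DKL = ∫ x, r x * Real.logb 2 (r x) ∂P)
    (hint : Integrable (fun x => r x * Real.logb 2 (r x)) P) :
    ∀ a ≥ (1 : ℝ), SP a * Real.logb 2 a ≤ DKL := by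
  intro a ha
  have hre : r = fun x => (Q.rnDeriv P x).toReal := funext hr
  have hr0 : ∀ x, 0 ≤ r x := fun x => hr x ▸ ENNReal.toReal_nonneg
  have hrint : Integrable r P := hre ▸ Measure.integrable_toReal_rnDeriv
  have hr1 : ∫ x, r x ∂P = 1 := by simp [hr, Measure.integral_toReal_rnDeriv hQP]
  have hlog2 : 0 < log 2 := log_pos one_lt_two
  have hint_log : Integrable (fun x => r x * log (r x)) P := by
    refine (hint.mul_const (log 2)).congr (ae_of_all _ fun x => ?_)
    simp only [logb]
    field_simp
  have hSPa : SP a = ∫ x, max (r x - a) 0 ∂P := by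
    rw [hSP, ← hr1, ← integral_sub_setIntegral_Ioc_measureReal_le hrint (ae_of_all _ hr0)
      (by linarith)]
    simp only [hwP, measureReal_def]
  rw [hSPa, hDKL, integral_mul_logb_eq, logb, ← mul_div_assoc, ← integral_mul_const,
    ← integral_klFun_eq_integral_mul_log hrint hr1 hint_log]
  refine div_le_div_of_nonneg_right (integral_mono ?_ ?_ fun x => ?_) hlog2.le
  · exact ((hrint.sub (integrable_const a)).sup (integrable_const 0)).mul_const _
  · exact hrint.klFun_comp hint_log
  · exact max_sub_zero_mul_log_le_klFun (hr0 x) ha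
end

section
/- Let Q ≪ P with r = dQ/dP and W_P(h) = ∫₀^h P[r ≥ η]dη. Fix M > 0 with W_P(M) > 0 and define the truncated measure Q_M by dQ_M/dP = min(r, M)/W_P(M). Then Q_M is a probability measure, and setting M̃ = M/W_P(M), the total variation distance satisfies D_TV(Q_M, Q) = S_P(M̃), where S_P(h) = 1 − W_P(h). -/
/-!
Write `g = min(r, M) / W_P(M)`. By the layer-cake formula `∫ min(r, c) dP = W_P(c)`, so `g` is a
probability density and `W_P(M) ≤ ∫ r dP = 1`. For two probability densities the total variation
distance is `∫ (r - g)⁺ dP`, attained on `{g < r}`. Because `W_P(M) ≤ 1`, `g ≥ r` wherever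
`r ≤ M̃`, while `g = M̃` wherever `r > M̃`; hence `(r - g)⁺ = (r - M̃)⁺ = r - min(r, M̃)`, whose
integral is `1 - W_P(M̃) = S_P(M̃)`.
-/

open MeasureTheory Set Filter

section TotalVariation

variable {α : Type*} [MeasurableSpace α] {μ : Measure α} {f g : α → ℝ}

lemma setIntegral_le_integral_max_zero (hf : Integrable f μ) (s : Set α) :
    ∫ x in s, f x ∂μ ≤ ∫ x, max (f x) 0 ∂μ :=
  calc ∫ x in s, f x ∂μ ≤ ∫ x in s, max (f x) 0 ∂μ :=
        integral_mono hf.restrict hf.pos_part.restrict fun _ => le_max_left _ _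
    _ ≤ ∫ x, max (f x) 0 ∂μ :=
        setIntegral_le_integral hf.pos_part (Eventually.of_forall fun _ => le_max_right _ _)

lemma integral_max_sub_zero_comm (hf : Integrable f μ) (hg : Integrable g μ)
    (hfg : ∫ x, f x ∂μ = ∫ x, g x ∂μ) :
    ∫ x, max (g x - f x) 0 ∂μ = ∫ x, max (f x - g x) 0 ∂μ := by
  have hdiff : ∀ x, max (g x - f x) 0 - max (f x - g x) 0 = g x - f x := fun x => by
    rcases le_total (g x) (f x) with h | h
    · rw [max_eq_right (sub_nonpos.2 h), max_eq_left (sub_nonneg.2 h)]; ring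
    · rw [max_eq_left (sub_nonneg.2 h), max_eq_right (sub_nonpos.2 h)]; ring
  have hzero : ∫ x, (max (g x - f x) 0 - max (f x - g x) 0) ∂μ = 0 := by
    simp only [hdiff]
    rw [integral_sub hg hf, hfg, sub_self]
  have hgf : Integrable (fun x => max (g x - f x) 0) μ := (hg.sub hf).pos_part
  have hfg : Integrable (fun x => max (f x - g x) 0) μ := (hf.sub hg).pos_part
  rwa [integral_sub hgf hfg, sub_eq_zero] at hzero

lemma setIntegral_sub_eq_integral_max_sub_zero (hf : Measurable f) (hg : Measurable g) :
    ∫ x in {x | g x < f x}, (f x - g x) ∂μ = ∫ x, max (f x - g x) 0 ∂μ := by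
  have hB : MeasurableSet {x | g x < f x} := measurableSet_lt hg hf
  rw [← setIntegral_eq_integral_of_forall_compl_eq_zero (s := {x | g x < f x})
    fun x hx => max_eq_right (sub_nonpos.2 (not_lt.1 hx))]
  exact setIntegral_congr_fun hB fun x hx => (max_eq_left (sub_nonneg.2 (le_of_lt hx))).symm

theorem isGreatest_abs_setIntegral_sub (hf : Measurable f) (hg : Measurable g)
    (hfi : Integrable f μ) (hgi : Integrable g μ) (hfg : ∫ x, f x ∂μ = ∫ x, g x ∂μ) :
    IsGreatest {d : ℝ | ∃ B : Set α, MeasurableSet B ∧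
        d = |∫ x in B, f x ∂μ - ∫ x in B, g x ∂μ|} (∫ x, max (f x - g x) 0 ∂μ) := by
  refine ⟨⟨{x | g x < f x}, measurableSet_lt hg hf, ?_⟩, ?_⟩
  · rw [← integral_sub hfi.restrict hgi.restrict, setIntegral_sub_eq_integral_max_sub_zero hf hg,
      abs_of_nonneg (integral_nonneg fun _ => le_max_right _ _)]
  · rintro d ⟨B, -, rfl⟩
    have hfg_le : ∫ x in B, (f x - g x) ∂μ ≤ ∫ x, max (f x - g x) 0 ∂μ :=
      setIntegral_le_integral_max_zero (hfi.sub hgi) B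
    have hgf_le : ∫ x in B, (g x - f x) ∂μ ≤ ∫ x, max (g x - f x) 0 ∂μ :=
      setIntegral_le_integral_max_zero (hgi.sub hfi) B
    rw [integral_max_sub_zero_comm hfi hgi hfg, integral_sub hgi.restrict hfi.restrict] at hgf_le
    rw [integral_sub hfi.restrict hgi.restrict] at hfg_le
    exact abs_le.2 ⟨by linarith, hfg_le⟩

end TotalVariation

section Truncation

variable {α : Type*} [MeasurableSpace α] {μ : Measure α} {r : α → ℝ} {c : ℝ}

lemma MeasureTheory.Integrable.min_const (hr : Integrable r μ) (hr0 : ∀ x, 0 ≤ r x) (hc : 0 ≤ c) :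
    Integrable (fun x => min (r x) c) μ :=
  hr.mono (hr.aestronglyMeasurable.inf aestronglyMeasurable_const) <|
    Eventually.of_forall fun x => by
      simp only [Real.norm_eq_abs, abs_of_nonneg (hr0 x), abs_of_nonneg (le_min (hr0 x) hc),
        min_le_left]

lemma integral_min_const_eq_integral_Ioc_meas_le (hr : Integrable r μ) (hr0 : ∀ x, 0 ≤ r x)
    (hc : 0 ≤ c) :
    ∫ x, min (r x) c ∂μ = ∫ t in Ioc 0 c, μ.real {x | t ≤ r x} := by
  rw [(hr.min_const hr0 hc).integral_eq_integral_Ioc_meas_le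
    (Eventually.of_forall fun x => le_min (hr0 x) hc)
    (Eventually.of_forall fun _ => min_le_right _ _)]
  refine setIntegral_congr_fun measurableSet_Ioc fun t ht => ?_
  simp only [le_min_iff, ht.2, and_true]

lemma max_sub_min_div_sub_zero_eq {y M W : ℝ} (hy : 0 ≤ y) (hM : 0 ≤ M) (hW0 : 0 < W)
    (hW1 : W ≤ 1) : max (y - min y M / W) 0 = max (y - M / W) 0 := by
  rcases le_total y M with h | h
  · have hyW : y ≤ y / W := le_div_self hy hW0 hW1
    have hMW : M ≤ M / W := le_div_self hM hW0 hW1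
    rw [min_eq_left h, max_eq_right (by linarith), max_eq_right (by linarith)]
  · rw [min_eq_right h]

lemma integral_max_sub_min_div_sub_zero (hr : Integrable r μ) (hr0 : ∀ x, 0 ≤ r x) {M W : ℝ}
    (hM : 0 ≤ M) (hW0 : 0 < W) (hW1 : W ≤ 1) :
    ∫ x, max (r x - min (r x) M / W) 0 ∂μ = ∫ x, r x ∂μ - ∫ x, min (r x) (M / W) ∂μ := by
  rw [← integral_sub hr (hr.min_const hr0 (div_nonneg hM hW0.le))]
  refine integral_congr_ae (Eventually.of_forall fun x => ?_)
  simp only [max_sub_min_div_sub_zero_eq (hr0 x) hM hW0 hW1]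
  rw [← max_sub_sub_left, sub_self, max_comm]

end Truncation

lemma withDensity_ofReal_apply_eq_ofReal_setIntegral {α : Type*} [MeasurableSpace α]
    {μ : Measure α} {g : α → ℝ} (hg : Integrable g μ) (hg0 : ∀ x, 0 ≤ g x) {B : Set α}
    (hB : MeasurableSet B) :
    μ.withDensity (fun x => ENNReal.ofReal (g x)) B = ENNReal.ofReal (∫ x in B, g x ∂μ) := by
  rw [withDensity_apply _ hB,
    ofReal_integral_eq_lintegral_ofReal hg.restrict (Eventually.of_forall hg0)]

/-- The truncated target `Q_M` with `dQ_M/dP = min(r, M)/W_P(M)` is a probability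
measure, and its total variation distance from `Q` equals `S_P(M̃)` with
`M̃ = M / W_P(M)`.  Total variation is expressed as the greatest value of
`|Q_M(B) − Q(B)|` over measurable `B`. -/
theorem truncated_target_tv {Ω : Type*} [MeasurableSpace Ω]
    (P Q : Measure Ω) [IsProbabilityMeasure P] [IsProbabilityMeasure Q]
    (hQP : Q ≪ P)
    (r : Ω → ℝ) (hr : ∀ x, r x = (Q.rnDeriv P x).toReal)
    (wP : ℝ → ℝ) (hwP : ∀ h, wP h = (P {x | h ≤ r x}).toReal)
    (WP : ℝ → ℝ) (hWP : ∀ h, WP h = ∫ η in Set.Ioc (0 : ℝ) h, wP η)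
    (SP : ℝ → ℝ) (hSP : ∀ h, SP h = 1 - WP h)
    (M : ℝ) (hM : 0 < M) (hWM : 0 < WP M)
    (QM : Measure Ω)
    (hQM : QM = P.withDensity (fun x => ENNReal.ofReal (min (r x) M / WP M))) :
    IsProbabilityMeasure QM ∧
      IsGreatest {d : ℝ | ∃ B : Set Ω, MeasurableSet B ∧
          d = |(QM B).toReal - (Q B).toReal|} (SP (M / WP M)) := by
  have hrE : r = fun x => (Q.rnDeriv P x).toReal := funext hr
  have hrm : Measurable r := hrE ▸ (Q.measurable_rnDeriv P).ennreal_toReal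
  have hr0 : ∀ x, 0 ≤ r x := fun x => hr x ▸ ENNReal.toReal_nonneg
  have hri : Integrable r P := hrE ▸ Measure.integrable_toReal_rnDeriv
  have hr1 : ∫ x, r x ∂P = 1 := by simp [hrE, Measure.integral_toReal_rnDeriv hQP]
  have hWP_eq : ∀ c, 0 ≤ c → WP c = ∫ x, min (r x) c ∂P := fun c hc => by
    rw [integral_min_const_eq_integral_Ioc_meas_le hri hr0 hc, hWP]
    exact setIntegral_congr_fun measurableSet_Ioc fun t _ => hwP t
  have hWM1 : WP M ≤ 1 := hr1 ▸ hWP_eq M hM.le ▸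
    integral_mono (hri.min_const hr0 hM.le) hri fun _ => min_le_left _ _
  set g : Ω → ℝ := fun x => min (r x) M / WP M
  have hg0 : ∀ x, 0 ≤ g x := fun x => div_nonneg (le_min (hr0 x) hM.le) hWM.le
  have hgi : Integrable g P := (hri.min_const hr0 hM.le).div_const _
  have hg1 : ∫ x, g x ∂P = 1 := by
    rw [integral_div, ← hWP_eq M hM.le, div_self hWM.ne']
  have hQM_apply : ∀ B, MeasurableSet B → QM B = ENNReal.ofReal (∫ x in B, g x ∂P) :=
    fun B hB => hQM ▸ withDensity_ofReal_apply_eq_ofReal_setIntegral hgi hg0 hB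
  refine ⟨⟨by rw [hQM_apply univ .univ, Measure.restrict_univ, hg1, ENNReal.ofReal_one]⟩, ?_⟩
  have hset : {d : ℝ | ∃ B : Set Ω, MeasurableSet B ∧ d = |(QM B).toReal - (Q B).toReal|} =
      {d : ℝ | ∃ B : Set Ω, MeasurableSet B ∧ d = |∫ x in B, r x ∂P - ∫ x in B, g x ∂P|} := by
    refine Set.ext fun d => exists_congr fun B => and_congr_right fun hB => ?_
    rw [hQM_apply B hB, ENNReal.toReal_ofReal (setIntegral_nonneg hB fun x _ => hg0 x),
      ← measureReal_def, ← Measure.setIntegral_toReal_rnDeriv hQP B, ← hrE, abs_sub_comm]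
  rw [hset, hSP, hWP_eq _ (div_pos hM hWM).le, ← hr1,
    ← integral_max_sub_min_div_sub_zero hri hr0 hM.le hWM hWM1]
  exact isGreatest_abs_setIntegral_sub hrm ((hrm.min measurable_const).div_const _) hri hgi
    (hr1.trans hg1.symm)
end

section
/- Let Q ≪ P with r = dQ/dP, and define W_P(h) = ∫₀^h P[r ≥ η]dη. Then the function φ(h) = h / W_P(h) is nondecreasing on (0, ∞); more precisely, for 0 < h₁ ≤ h₂ with W_P(h₁) > 0 one has h₁/W_P(h₁) ≤ h₂/W_P(h₂). Moreover, the inequality is strict whenever h₁ is strictly larger than the Q-essential infimum of r. -/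
/-!
Write `w(h) = P(r ≥ h)` and `W = W_P`. Since `w` is nonincreasing, `h w(h) ≤ W(h)` and
`W(h₂) ≤ W(h₁) + (h₂ - h₁) w(h₁)`; combining the two gives `h₁ W(h₂) ≤ h₂ W(h₁)`, i.e. the
average `W(h)/h` is nonincreasing. The inequality is strict as soon as `h₁ w(h₁) < W(h₁)`, which
holds when `w` drops somewhere in `(0, h₁)`. If `h₁` exceeds the `Q`-essential infimum of `r`, then
`Q(r < h₁) > 0`; as `r > 0` `Q`-a.e. and `Q ≪ P`, also `P(0 < r < h₁) > 0`, so by continuity of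
`P` from below `w(ε) > w(h₁)` for some `ε ∈ (0, h₁)`.
-/

open MeasureTheory Set Filter

namespace Antitone

variable {w : ℝ → ℝ} (hw : Antitone w)
include hw

theorem sub_mul_le_intervalIntegral {a b : ℝ} (hab : a ≤ b) :
    (b - a) * w b ≤ ∫ x in a..b, w x := by
  simpa using intervalIntegral.integral_mono_on (μ := volume) hab intervalIntegrable_const
    hw.intervalIntegrable fun x hx => hw hx.2

theorem intervalIntegral_le_sub_mul {a b : ℝ} (hab : a ≤ b) :
    ∫ x in a..b, w x ≤ (b - a) * w a := by
  simpa using intervalIntegral.integral_mono_on (μ := volume) hab hw.intervalIntegrable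
    intervalIntegrable_const fun x hx => hw hx.1

theorem intervalIntegral_le_add_sub_mul {h₁ h₂ : ℝ} (h12 : h₁ ≤ h₂) :
    ∫ x in 0..h₂, w x ≤ (∫ x in 0..h₁, w x) + (h₂ - h₁) * w h₁ := by
  rw [← intervalIntegral.integral_add_adjacent_intervals hw.intervalIntegrable
    hw.intervalIntegrable]
  linarith [hw.intervalIntegral_le_sub_mul h12]

theorem mul_intervalIntegral_le {h₁ h₂ : ℝ} (hh₁ : 0 ≤ h₁) (h12 : h₁ ≤ h₂) :
    h₁ * ∫ x in 0..h₂, w x ≤ h₂ * ∫ x in 0..h₁, w x := by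
  have hsplit := hw.intervalIntegral_le_add_sub_mul h12
  have hlow : h₁ * w h₁ ≤ ∫ x in 0..h₁, w x := by
    simpa using hw.sub_mul_le_intervalIntegral hh₁
  set I₁ := ∫ x in 0..h₁, w x
  calc h₁ * ∫ x in 0..h₂, w x ≤ h₁ * (I₁ + (h₂ - h₁) * w h₁) := by gcongr
    _ = h₁ * I₁ + (h₂ - h₁) * (h₁ * w h₁) := by ring
    _ ≤ h₁ * I₁ + (h₂ - h₁) * I₁ := by gcongr
    _ = h₂ * I₁ := by ring

theorem mul_intervalIntegral_lt {h₁ h₂ : ℝ} (hh₁ : 0 ≤ h₁) (h12 : h₁ < h₂)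
    (hlow : h₁ * w h₁ < ∫ x in 0..h₁, w x) :
    h₁ * ∫ x in 0..h₂, w x < h₂ * ∫ x in 0..h₁, w x := by
  have hsplit := hw.intervalIntegral_le_add_sub_mul h12.le
  set I₁ := ∫ x in 0..h₁, w x
  calc h₁ * ∫ x in 0..h₂, w x ≤ h₁ * (I₁ + (h₂ - h₁) * w h₁) := by gcongr
    _ = h₁ * I₁ + (h₂ - h₁) * (h₁ * w h₁) := by ring
    _ < h₁ * I₁ + (h₂ - h₁) * I₁ := by gcongr
    _ = h₂ * I₁ := by ring

theorem mul_lt_intervalIntegral {ε h : ℝ} (hε : 0 < ε) (hεh : ε < h) (hlt : w h < w ε) :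
    h * w h < ∫ x in 0..h, w x :=
  calc h * w h = ε * w h + (h - ε) * w h := by ring
    _ < ε * w ε + (h - ε) * w h := by gcongr
    _ ≤ (∫ x in 0..ε, w x) + ∫ x in ε..h, w x :=
        add_le_add (by simpa using hw.sub_mul_le_intervalIntegral hε.le)
          (hw.sub_mul_le_intervalIntegral hεh.le)
    _ = ∫ x in 0..h, w x :=
        intervalIntegral.integral_add_adjacent_intervals hw.intervalIntegrable
          hw.intervalIntegrable

theorem div_intervalIntegral_le (hw0 : ∀ x, 0 ≤ w x) {h₁ h₂ : ℝ} (hh₁ : 0 < h₁)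
    (h12 : h₁ ≤ h₂) (hW : 0 < ∫ x in 0..h₁, w x) :
    h₁ / ∫ x in 0..h₁, w x ≤ h₂ / ∫ x in 0..h₂, w x := by
  have hW₂ : 0 < ∫ x in 0..h₂, w x := hW.trans_le <| intervalIntegral.integral_mono_interval
    le_rfl hh₁.le h12 (ae_of_all _ hw0) hw.intervalIntegrable
  rw [div_le_div_iff₀ hW hW₂]
  exact hw.mul_intervalIntegral_le hh₁.le h12

theorem div_intervalIntegral_lt (hw0 : ∀ x, 0 ≤ w x) {h₁ h₂ : ℝ} (hh₁ : 0 < h₁)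
    (h12 : h₁ < h₂) (hW : 0 < ∫ x in 0..h₁, w x) (hlow : h₁ * w h₁ < ∫ x in 0..h₁, w x) :
    h₁ / ∫ x in 0..h₁, w x < h₂ / ∫ x in 0..h₂, w x := by
  have hW₂ : 0 < ∫ x in 0..h₂, w x := hW.trans_le <| intervalIntegral.integral_mono_interval
    le_rfl hh₁.le h12.le (ae_of_all _ hw0) hw.intervalIntegrable
  rw [div_lt_div_iff₀ hW hW₂]
  exact hw.mul_intervalIntegral_lt hh₁.le h12 hlow

end Antitone

section Measure

variable {α : Type*} [MeasurableSpace α] (μ : Measure α)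

theorem antitone_toReal_measure_le [IsFiniteMeasure μ] (f : α → ℝ) :
    Antitone fun c => (μ {x | c ≤ f x}).toReal := fun _ _ hab =>
  ENNReal.toReal_mono (measure_ne_top _ _) (measure_mono fun _ hx => hab.trans hx)

theorem isCoboundedUnder_ge_ae [NeZero μ] (f : α → ℝ) : IsCoboundedUnder (· ≥ ·) (ae μ) f := by
  have hunbdd : ¬ ∀ᵐ x ∂μ, ∀ n : ℕ, (n : ℝ) < f x := fun h => by
    obtain ⟨x, hx⟩ := h.exists
    obtain ⟨n, hn⟩ := exists_nat_ge (f x)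
    exact (hx n).not_ge hn
  obtain ⟨n, hn⟩ := not_forall.1 (ae_all_iff.not.1 hunbdd)
  exact IsCoboundedUnder.of_frequently_le (a := (n : ℝ))
    ((not_eventually.1 hn).mono fun _ => le_of_not_gt)

theorem measure_lt_ne_zero_of_essInf_lt [NeZero μ] {f : α → ℝ} {c : ℝ} (h : essInf f μ < c) :
    μ {x | f x < c} ≠ 0 := by
  intro h0
  refine h.not_ge (le_essInf_of_ae_le c ?_ (isCoboundedUnder_ge_ae μ f))
  rw [EventuallyLE, ae_iff]
  simpa using h0

theorem exists_measure_le_lt_measure_le [IsFiniteMeasure μ] {f : α → ℝ} (hf : Measurable f)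
    {c : ℝ} (h : μ {x | 0 < f x ∧ f x < c} ≠ 0) :
    ∃ ε, 0 < ε ∧ ε < c ∧ μ {x | c ≤ f x} < μ {x | ε ≤ f x} := by
  have hcover : {x | 0 < f x ∧ f x < c} ⊆ ⋃ n : ℕ, {x | 1 / (n + 1 : ℝ) ≤ f x ∧ f x < c} :=
    fun x hx => mem_iUnion.2 <| (exists_nat_one_div_lt hx.1).imp fun _ hn => ⟨hn.le, hx.2⟩
  obtain ⟨n, hn⟩ : ∃ n : ℕ, μ {x | 1 / (n + 1 : ℝ) ≤ f x ∧ f x < c} ≠ 0 := by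
    by_contra! hnull
    exact h (measure_mono_null hcover (measure_iUnion_null hnull))
  set ε : ℝ := 1 / (n + 1 : ℝ)
  obtain ⟨x₀, hx₀⟩ := nonempty_of_measure_ne_zero hn
  refine ⟨ε, by positivity, hx₀.1.trans_lt hx₀.2, ?_⟩
  have hdisj : Disjoint {x | c ≤ f x} {x | ε ≤ f x ∧ f x < c} :=
    disjoint_left.2 fun _ hc hlt => hlt.2.not_ge hc
  calc μ {x | c ≤ f x} < μ {x | c ≤ f x} + μ {x | ε ≤ f x ∧ f x < c} :=
        ENNReal.lt_add_right (measure_ne_top _ _) hn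
    _ = μ ({x | c ≤ f x} ∪ {x | ε ≤ f x ∧ f x < c}) :=
        (measure_union hdisj ((hf measurableSet_Ici).inter (hf measurableSet_Iio))).symm
    _ ≤ μ {x | ε ≤ f x} := measure_mono <| union_subset
        (fun x hx => (hx₀.1.trans_lt hx₀.2).le.trans hx) fun _ hx => hx.1

end Measure

theorem ae_toReal_rnDeriv_pos {α : Type*} [MeasurableSpace α] {μ ν : Measure α}
    [IsFiniteMeasure μ] [IsFiniteMeasure ν] (hμν : μ ≪ ν) :
    ∀ᵐ x ∂μ, 0 < (μ.rnDeriv ν x).toReal := by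
  filter_upwards [Measure.rnDeriv_pos hμν, hμν.ae_le (Measure.rnDeriv_lt_top μ ν)] with x h0 htop
  exact ENNReal.toReal_pos h0.ne' htop.ne

theorem exists_measure_le_toReal_rnDeriv_lt {α : Type*} [MeasurableSpace α] {μ ν : Measure α}
    [IsFiniteMeasure μ] [NeZero μ] [IsFiniteMeasure ν] (hμν : μ ≪ ν) {c : ℝ}
    (hc : essInf (fun x => (μ.rnDeriv ν x).toReal) μ < c) :
    ∃ ε, 0 < ε ∧ ε < c ∧
      ν {x | c ≤ (μ.rnDeriv ν x).toReal} < ν {x | ε ≤ (μ.rnDeriv ν x).toReal} := by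
  refine exists_measure_le_lt_measure_le ν (Measure.measurable_rnDeriv μ ν).ennreal_toReal
    fun hnull => measure_lt_ne_zero_of_essInf_lt μ hc (measure_mono_null_ae ?_ (hμν hnull))
  filter_upwards [ae_toReal_rnDeriv_pos hμν] with x hpos hlt using ⟨hpos, hlt⟩

/-- The function `φ(h) = h / W_P(h)` is nondecreasing on `(0, ∞)`, and strictly
increasing beyond the `Q`-essential infimum of `r`. -/
theorem phi_monotone {Ω : Type*} [MeasurableSpace Ω]
    (P Q : Measure Ω) [IsProbabilityMeasure P] [IsProbabilityMeasure Q]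
    (hQP : Q ≪ P)
    (r : Ω → ℝ) (hr : ∀ x, r x = (Q.rnDeriv P x).toReal)
    (wP : ℝ → ℝ) (hwP : ∀ h, wP h = (P {x | h ≤ r x}).toReal)
    (WP : ℝ → ℝ) (hWP : ∀ h, WP h = ∫ η in Set.Ioc (0 : ℝ) h, wP η) :
    (∀ h₁ h₂ : ℝ, 0 < h₁ → h₁ ≤ h₂ → 0 < WP h₁ →
        h₁ / WP h₁ ≤ h₂ / WP h₂) ∧
    (∀ h₁ h₂ : ℝ, 0 < h₁ → h₁ < h₂ → 0 < WP h₁ → essInf r Q < h₁ →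
        h₁ / WP h₁ < h₂ / WP h₂) := by
  obtain rfl : r = fun x => (Q.rnDeriv P x).toReal := funext hr
  have hanti : Antitone wP := funext hwP ▸ antitone_toReal_measure_le P _
  have hnonneg : ∀ h, 0 ≤ wP h := fun h => hwP h ▸ ENNReal.toReal_nonneg
  have hWP_eq : ∀ h, 0 ≤ h → WP h = ∫ η in 0..h, wP η :=
    fun h hh => (hWP h).trans (intervalIntegral.integral_of_le hh).symm
  refine ⟨fun h₁ h₂ hh₁ h12 hW₁ => ?_, fun h₁ h₂ hh₁ h12 hW₁ hess => ?_⟩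
  · rw [hWP_eq h₁ hh₁.le] at hW₁ ⊢
    rw [hWP_eq h₂ (hh₁.le.trans h12)]
    exact hanti.div_intervalIntegral_le hnonneg hh₁ h12 hW₁
  · obtain ⟨ε, hε, hεh₁, hlt⟩ := exists_measure_le_toReal_rnDeriv_lt hQP hess
    have hwε : wP h₁ < wP ε := by
      rw [hwP, hwP]
      exact (ENNReal.toReal_lt_toReal (measure_ne_top _ _) (measure_ne_top _ _)).2 hlt
    rw [hWP_eq h₁ hh₁.le] at hW₁ ⊢
    rw [hWP_eq h₂ (hh₁.le.trans h12.le)]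
    exact hanti.div_intervalIntegral_lt hnonneg hh₁ h12 hW₁
      (hanti.mul_lt_intervalIntegral hε hεh₁ hwε)
end

section
/- (Strengthened Chatterjee–Diaconis bound, variance part) Let Q ≪ P with r = dQ/dP, let φ ∈ L²(Q), fix a > 0, and define h(x) = φ(x)·min(a/r(x), 1). Let X₁,...,X_n be i.i.d. P-distributed and I_n(h) = (1/n)Σᵢ h(Xᵢ)r(Xᵢ), I(h) = E_{Y∼Q}[h(Y)]. Then E[(I_n(h) − I(h))²] ≤ (a/n)·‖φ‖²_{L²(Q)}. -/
/-!
The estimator is the sample mean of `g = h * r` under `P`, and `E_P[g] = E_Q[h] = I` by the change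
of measure, so its mean squared error is `Var_P[g] / n ≤ E_P[g²] / n`. Since `g = (r ∧ a) * φ`, we
have `g² ≤ a * r * φ²`, whose `P`-integral is `a * ‖φ‖²_{L²(Q)}`.
-/

open MeasureTheory
open scoped ProbabilityTheory

namespace ProbabilityTheory

variable {ι Ω : Type*} [Fintype ι] [MeasurableSpace Ω] {P : Measure Ω} [IsProbabilityMeasure P]
  {g : Ω → ℝ}

lemma integral_sampleMean_pi [Nonempty ι] (hg : Integrable g P) :
    ∫ ω : ι → Ω, (Fintype.card ι : ℝ)⁻¹ * ∑ i, g (ω i) ∂Measure.pi (fun _ ↦ P)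
      = ∫ x, g x ∂P := by
  rw [integral_const_mul, integral_finsetSum _ fun i _ ↦ integrable_comp_eval hg]
  simp_rw [integral_comp_eval (μ := fun _ ↦ P) hg.aestronglyMeasurable]
  simp

lemma variance_sampleMean_pi (hg : MemLp g 2 P) :
    Var[fun ω : ι → Ω ↦ (Fintype.card ι : ℝ)⁻¹ * ∑ i, g (ω i); Measure.pi (fun _ ↦ P)]
      = Var[g; P] / Fintype.card ι := by
  have hsum : (fun ω : ι → Ω ↦ ∑ i, g (ω i)) = ∑ i, fun ω ↦ g (ω i) := by
    ext ω; simp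
  rw [variance_const_mul, hsum, variance_sum_pi fun _ ↦ hg]
  rw [Finset.sum_const, Finset.card_univ, nsmul_eq_mul]
  field_simp

lemma integral_sq_sampleMean_sub_integral [Nonempty ι] (hg : MemLp g 2 P) :
    ∫ ω : ι → Ω, ((Fintype.card ι : ℝ)⁻¹ * ∑ i, g (ω i) - ∫ x, g x ∂P) ^ 2
        ∂Measure.pi (fun _ ↦ P)
      = Var[g; P] / Fintype.card ι := by
  have hg₁ := hg.integrable one_le_two
  have hmean_meas : AEMeasurable (fun ω : ι → Ω ↦ (Fintype.card ι : ℝ)⁻¹ * ∑ i, g (ω i))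
      (Measure.pi fun _ ↦ P) :=
    ((integrable_finsetSum _ fun i _ ↦ integrable_comp_eval hg₁).const_mul _).aemeasurable
  rw [← variance_sampleMean_pi hg, variance_eq_integral hmean_meas, integral_sampleMean_pi hg₁]

lemma integral_sq_sampleMean_sub_integral_le [Nonempty ι] (hg : MemLp g 2 P) :
    ∫ ω : ι → Ω, ((Fintype.card ι : ℝ)⁻¹ * ∑ i, g (ω i) - ∫ x, g x ∂P) ^ 2
        ∂Measure.pi (fun _ ↦ P)
      ≤ (∫ x, g x ^ 2 ∂P) / Fintype.card ι := by
  rw [integral_sq_sampleMean_sub_integral hg]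
  gcongr
  exact variance_le_expectation_sq hg.aestronglyMeasurable

end ProbabilityTheory

lemma MeasureTheory.memLp_two_of_sq_le_mul {α : Type*} [MeasurableSpace α] {μ : Measure α}
    {g f : α → ℝ} {c : ℝ} (hg : AEStronglyMeasurable g μ) (hf : Integrable f μ)
    (hle : ∀ᵐ x ∂μ, g x ^ 2 ≤ c * f x) : MemLp g 2 μ := by
  refine (memLp_two_iff_integrable_sq hg).2 <| (hf.const_mul c).mono' (hg.pow 2) ?_
  filter_upwards [hle] with x hx
  rwa [Real.norm_of_nonneg (sq_nonneg _)]

lemma sq_mul_min_div_one_mul_le {a r : ℝ} (ha : 0 ≤ a) (hr : 0 ≤ r) (φ : ℝ) :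
    (φ * min (a / r) 1 * r) ^ 2 ≤ a * (φ ^ 2 * r) := by
  rcases hr.eq_or_lt with rfl | hr
  · simp
  rw [mul_assoc, min_mul_of_nonneg _ _ hr.le, div_mul_cancel₀ _ hr.ne', one_mul]
  have : min a r ^ 2 ≤ a * r := by
    nlinarith [min_le_left a r, min_le_right a r, le_min ha hr.le]
  nlinarith [sq_nonneg φ]

/-- Strengthened Chatterjee–Diaconis bound, variance part: for the truncated
test function `h(x) = φ(x)·min(a/r(x), 1)` and i.i.d. `P`-samples
`X₁, ..., X_n`, the importance-sampling estimator `I_n(h) = (1/n)∑ h(Xᵢ)r(Xᵢ)`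
satisfies `E[(I_n(h) − I(h))²] ≤ (a/n)·‖φ‖²_{L²(Q)}`. -/
theorem cd_variance_bound {Ω : Type*} [MeasurableSpace Ω]
    (P Q : Measure Ω) [IsProbabilityMeasure P] [IsProbabilityMeasure Q]
    (hQP : Q ≪ P)
    (r : Ω → ℝ) (hr : ∀ x, r x = (Q.rnDeriv P x).toReal)
    (φ : Ω → ℝ) (hφmeas : Measurable φ) (hφ : MeasureTheory.MemLp φ 2 Q)
    (a : ℝ) (ha : 0 < a)
    (h : Ω → ℝ) (hdef : ∀ x, h x = φ x * min (a / r x) 1)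
    (n : ℕ) (hn : 0 < n)
    (I : ℝ) (hI : I = ∫ x, h x ∂Q) :
    ∫ ω : Fin n → Ω,
        ((1 / (n : ℝ)) * ∑ i, h (ω i) * r (ω i) - I) ^ 2
        ∂(Measure.pi fun _ => P)
      ≤ (a / n) * ∫ x, (φ x) ^ 2 ∂Q := by
  have hr_eq : r = fun x ↦ (Q.rnDeriv P x).toReal := funext hr
  have hr_meas : Measurable r := hr_eq ▸ (Measure.measurable_rnDeriv Q P).ennreal_toReal
  have hg_meas : Measurable fun x ↦ h x * r x := by
    rw [funext hdef]
    exact (hφmeas.mul ((measurable_const.div hr_meas).min measurable_const)).mul hr_meas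
  have hg_sq (x : Ω) : (h x * r x) ^ 2 ≤ a * (φ x ^ 2 * r x) :=
    hdef x ▸ sq_mul_min_div_one_mul_le ha.le (hr x ▸ ENNReal.toReal_nonneg) (φ x)
  have hφr_int : Integrable (fun x ↦ φ x ^ 2 * r x) P := by
    simp_rw [mul_comm _ (r _), hr_eq]
    exact (integrable_toReal_rnDeriv_mul_iff hQP).2 hφ.integrable_sq
  have hg : MemLp (fun x ↦ h x * r x) 2 P :=
    memLp_two_of_sq_le_mul hg_meas.aestronglyMeasurable hφr_int (ae_of_all _ hg_sq)
  have hmean : ∫ x, h x * r x ∂P = I := by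
    simp_rw [hI, mul_comm _ (r _), hr_eq]
    exact integral_toReal_rnDeriv_mul hQP
  have : Nonempty (Fin n) := ⟨⟨0, hn⟩⟩
  calc _ ≤ (∫ x, (h x * r x) ^ 2 ∂P) / n := by
        simpa [hmean] using ProbabilityTheory.integral_sq_sampleMean_sub_integral_le (ι := Fin n) hg
    _ ≤ (∫ x, a * (φ x ^ 2 * r x) ∂P) / n := by
        gcongr ?_ / _
        exact integral_mono hg.integrable_sq (hφr_int.const_mul a) hg_sq
    _ = (a / n) * ∫ x, φ x ^ 2 ∂Q := by
        simp_rw [integral_const_mul, mul_comm _ (r _), hr_eq, integral_toReal_rnDeriv_mul hQP]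
        ring
end

section
/- (Strengthened Chatterjee–Diaconis bound, bias part) With the same setup, define w_Q-tail quantities via S_P(a) = 1 − ∫₀^a P(r ≥ η)dη. Then |I(φ) − I(h)| = E_{Y∼Q}[φ(Y) − h(Y)] (when φ ≥ 0 this is an equality of absolute values) and by Cauchy–Schwarz |I(φ) − I(h)| ≤ ‖φ‖_{L²(Q)} · S_P(a)^{1/2}. -/
/-!
With `g := 1 - min (a / r) 1 ∈ [0, 1]` we have `φ - h = φ g ≥ 0`, so the first claim is the
positivity of the integral. Changing measure, `∫ min (a / r) 1 dQ = ∫ min r a dP`, and the layer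
cake formula for the bounded function `min r a` gives `∫ min r a dP = ∫₀ᵃ P(r ≥ η) dη`; hence
`∫ g dQ = S_P(a)`. Cauchy–Schwarz together with `g² ≤ g` then bounds `∫ φ g dQ`.
-/

open MeasureTheory Set

theorem min_div_one_mem_Icc {r a : ℝ} (hr : 0 ≤ r) (ha : 0 ≤ a) : min (a / r) 1 ∈ Icc 0 1 :=
  ⟨le_min (div_nonneg ha hr) zero_le_one, min_le_right _ _⟩

theorem norm_min_div_one_le {r a : ℝ} (hr : 0 ≤ r) (ha : 0 ≤ a) : ‖min (a / r) 1‖ ≤ 1 := by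
  obtain ⟨h_nn, h_le⟩ := min_div_one_mem_Icc hr ha
  rwa [Real.norm_of_nonneg h_nn]

theorem mul_min_div_one {r a : ℝ} (hr : 0 ≤ r) (ha : 0 ≤ a) : r * min (a / r) 1 = min r a := by
  rcases hr.eq_or_lt with rfl | hr
  · simp [ha]
  · rw [mul_min_of_nonneg _ _ hr.le, mul_div_cancel₀ _ hr.ne', mul_one, min_comm]

namespace MeasureTheory

variable {α : Type*} [MeasurableSpace α] {μ ν : Measure α}

theorem integral_min_eq_integral_Ioc_meas_le [IsFiniteMeasure μ] {f : α → ℝ}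
    (hf : AEStronglyMeasurable f μ) (hf_nn : 0 ≤ᵐ[μ] f) {a : ℝ} (ha : 0 ≤ a) :
    ∫ x, min (f x) a ∂μ = ∫ t in Ioc 0 a, μ.real {x | t ≤ f x} := by
  have hmin_nn : 0 ≤ᵐ[μ] fun x => min (f x) a := by
    filter_upwards [hf_nn] with x hx using le_min hx ha
  have hmin_int : Integrable (fun x => min (f x) a) μ := by
    refine .of_bound (hf.inf aestronglyMeasurable_const) a ?_
    filter_upwards [hmin_nn] with x hx
    rw [Real.norm_of_nonneg hx]
    exact min_le_right _ _
  rw [hmin_int.integral_eq_integral_Ioc_meas_le hmin_nn (.of_forall fun x => min_le_right _ _)]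
  refine setIntegral_congr_fun measurableSet_Ioc fun t ht => ?_
  simp only [le_min_iff, ht.2, and_true]

theorem integral_min_div_rnDeriv_one [μ.HaveLebesgueDecomposition ν] [SigmaFinite μ]
    (hμν : μ ≪ ν) {a : ℝ} (ha : 0 ≤ a) :
    ∫ x, min (a / (μ.rnDeriv ν x).toReal) 1 ∂μ =
      ∫ x, min ((μ.rnDeriv ν x).toReal) a ∂ν := by
  rw [← integral_toReal_rnDeriv_mul hμν]
  simp only [mul_min_div_one ENNReal.toReal_nonneg ha]

theorem integral_one_sub_min_div_rnDeriv_one [IsProbabilityMeasure μ] [IsFiniteMeasure ν]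
    (hμν : μ ≪ ν) {a : ℝ} (ha : 0 ≤ a) :
    ∫ x, (1 - min (a / (μ.rnDeriv ν x).toReal) 1) ∂μ =
      1 - ∫ t in Ioc 0 a, ν.real {x | t ≤ (μ.rnDeriv ν x).toReal} := by
  have hm_int : Integrable (fun x => min (a / (μ.rnDeriv ν x).toReal) 1) μ :=
    .of_bound (by fun_prop : Measurable _).aestronglyMeasurable 1
      (.of_forall fun _ => norm_min_div_one_le ENNReal.toReal_nonneg ha)
  rw [integral_sub (integrable_const 1) hm_int, integral_min_div_rnDeriv_one hμν ha,
    integral_min_eq_integral_Ioc_meas_le (by fun_prop : Measurable _).aestronglyMeasurable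
      (.of_forall fun _ => ENNReal.toReal_nonneg) ha]
  simp

theorem integral_mul_le_sqrt_integral_sq_mul_sqrt_integral [IsFiniteMeasure μ] {φ g : α → ℝ}
    (hφ_nn : ∀ x, 0 ≤ φ x) (hφ : MemLp φ 2 μ) (hg : AEStronglyMeasurable g μ)
    (hg_nn : ∀ x, 0 ≤ g x) (hg_le : ∀ x, g x ≤ 1) :
    ∫ x, φ x * g x ∂μ ≤ √(∫ x, φ x ^ 2 ∂μ) * √(∫ x, g x ∂μ) := by
  have hg_bdd : ∀ x, ‖g x‖ ≤ 1 := fun x => by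
    rw [Real.norm_of_nonneg (hg_nn x)]; exact hg_le x
  have hg_int : Integrable g μ := .of_bound hg 1 (.of_forall hg_bdd)
  have hg_sq_int : Integrable (fun x => g x ^ 2) μ :=
    .of_bound (hg.pow 2) 1
      (.of_forall fun x => by simpa using pow_le_one₀ (n := 2) (norm_nonneg _) (hg_bdd x))
  have hg_sq_le : ∫ x, g x ^ 2 ∂μ ≤ ∫ x, g x ∂μ :=
    integral_mono hg_sq_int hg_int fun x => by nlinarith [hg_nn x, hg_le x]
  have hHolder := integral_mul_le_Lp_mul_Lq_of_nonneg Real.HolderConjugate.two_two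
    (.of_forall hφ_nn) (.of_forall hg_nn) (by simpa using hφ)
    (by simpa using MemLp.of_bound hg 1 (.of_forall hg_bdd))
  simp only [Real.rpow_ofNat, ← Real.sqrt_eq_rpow] at hHolder
  exact hHolder.trans (by gcongr)

end MeasureTheory

theorem cd_bias_bound_general {Ω : Type*} [MeasurableSpace Ω]
    (P Q : Measure Ω) [IsProbabilityMeasure P] [IsProbabilityMeasure Q]
    (hQP : Q ≪ P)
    (r : Ω → ℝ) (hr : ∀ x, r x = (Q.rnDeriv P x).toReal)
    (wP : ℝ → ℝ) (hwP : ∀ η, wP η = (P {x | η ≤ r x}).toReal)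
    (SP : ℝ → ℝ) (hSP : ∀ t, SP t = 1 - ∫ η in Set.Ioc (0 : ℝ) t, wP η)
    (φ : Ω → ℝ) (hφpos : ∀ x, 0 ≤ φ x)
    (hφ : MeasureTheory.MemLp φ 2 Q)
    (a : ℝ) (ha : 0 < a)
    (h : Ω → ℝ) (hdef : ∀ x, h x = φ x * min (a / r x) 1) :
    |(∫ x, φ x ∂Q) - ∫ x, h x ∂Q| = ∫ x, (φ x - h x) ∂Q ∧
    |(∫ x, φ x ∂Q) - ∫ x, h x ∂Q|
      ≤ Real.sqrt (∫ x, (φ x) ^ 2 ∂Q) * Real.sqrt (SP a) := by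
  have hm_meas : Measurable fun x => min (a / r x) 1 := by simp only [hr]; fun_prop
  have hr_nn : ∀ x, 0 ≤ r x := fun x => by rw [hr]; exact ENNReal.toReal_nonneg
  have hm_mem : ∀ x, min (a / r x) 1 ∈ Icc 0 1 := fun x => min_div_one_mem_Icc (hr_nn x) ha.le
  have hintφ : Integrable φ Q := hφ.integrable one_le_two
  have hinth : Integrable h Q := by
    rw [show h = fun x => φ x * min (a / r x) 1 from funext hdef]
    exact hintφ.mul_bdd hm_meas.aestronglyMeasurable
      (.of_forall fun x => norm_min_div_one_le (hr_nn x) ha.le)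
  have hgap : ∀ x, φ x - h x = φ x * (1 - min (a / r x) 1) := fun x => by rw [hdef]; ring
  have hweight : ∫ x, (1 - min (a / r x) 1) ∂Q = SP a := by
    simpa only [← hr, hSP, hwP, measureReal_def] using
      integral_one_sub_min_div_rnDeriv_one hQP ha.le
  have hgap_nn : 0 ≤ ∫ x, (φ x - h x) ∂Q := integral_nonneg fun x => by
    rw [hgap]; exact mul_nonneg (hφpos x) (by linarith [(hm_mem x).2])
  rw [← integral_sub hintφ hinth, abs_of_nonneg hgap_nn]
  refine ⟨rfl, ?_⟩
  simp only [hgap, ← hweight]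
  exact integral_mul_le_sqrt_integral_sq_mul_sqrt_integral hφpos hφ
    (measurable_const.sub hm_meas).aestronglyMeasurable
    (fun x => by linarith [(hm_mem x).2]) (fun x => by linarith [(hm_mem x).1])

/-- Strengthened Chatterjee–Diaconis bound, bias part: with
`h(x) = φ(x)·min(a/r(x), 1)` and `φ ≥ 0`, we have
`|I(φ) − I(h)| = E_Q[φ − h] ≤ ‖φ‖_{L²(Q)} · S_P(a)^{1/2}`. -/
theorem cd_bias_bound {Ω : Type*} [MeasurableSpace Ω]
    (P Q : Measure Ω) [IsProbabilityMeasure P] [IsProbabilityMeasure Q]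
    (hQP : Q ≪ P)
    (r : Ω → ℝ) (hr : ∀ x, r x = (Q.rnDeriv P x).toReal)
    (wP : ℝ → ℝ) (hwP : ∀ η, wP η = (P {x | η ≤ r x}).toReal)
    (SP : ℝ → ℝ) (hSP : ∀ t, SP t = 1 - ∫ η in Set.Ioc (0 : ℝ) t, wP η)
    (φ : Ω → ℝ) (hφmeas : Measurable φ) (hφpos : ∀ x, 0 ≤ φ x)
    (hφ : MeasureTheory.MemLp φ 2 Q)
    (a : ℝ) (ha : 0 < a)
    (h : Ω → ℝ) (hdef : ∀ x, h x = φ x * min (a / r x) 1)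
    (hinth : Integrable h Q) (hintφ : Integrable φ Q) :
    |(∫ x, φ x ∂Q) - ∫ x, h x ∂Q| = ∫ x, (φ x - h x) ∂Q ∧
    |(∫ x, φ x ∂Q) - ∫ x, h x ∂Q|
      ≤ Real.sqrt (∫ x, (φ x) ^ 2 ∂Q) * Real.sqrt (SP a) :=
  cd_bias_bound_general P Q hQP r hr wP hwP SP hSP φ hφpos hφ a ha h hdef
end
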